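/- Let a : ℕ → GF(2) have period P_a, and let β, λ : ℕ → GF(2) have periods P_β and P_λ respectively. Define p(t) = #{i < t : a_i = 1} and q(t) = t - p(t), and z_t = β_{p(t)} ⊕ λ_{q(t)}. Let w be the number of ones among a_0,...,a_{P_a - 1}. If w is a multiple of P_β and P_a - w is a multiple of P_λ, then z has period P_a. -/
import Mathlib

private lemma periodic_mul {f : ℕ → ZMod 2} {P : ℕ} (hf : ∀ t, f (t + P) = f t) :
    ∀ k t, f (t + k * P) = f t := by
  intro k
  induction k with
  | zero => simp
  | succ n ih =>
    intro t
    have : t + (n + 1) * P = (t + n * P) + P := by ring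
    rw [this, hf, ih]

theorem asg_output_period (Pa Pb Pl : ℕ) (a b l : ℕ → ZMod 2)
    (ha : ∀ t, a (t + Pa) = a t) (hb : ∀ t, b (t + Pb) = b t)
    (hl : ∀ t, l (t + Pl) = l t)
    (p : ℕ → ℕ) (hp : ∀ t, p t = ((Finset.range t).filter (fun i => a i = 1)).card)
    (q : ℕ → ℕ) (hq : ∀ t, q t = t - p t)
    (z : ℕ → ZMod 2) (hz : ∀ t, z t = b (p t) + l (q t))
    (w : ℕ) (hw : w = ((Finset.range Pa).filter (fun i => a i = 1)).card)
    (hwb : Pb ∣ w) (hwl : Pl ∣ (Pa - w)) :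
    ∀ t, z (t + Pa) = z t := by
  have hstep : ∀ t, p (t + 1) = p t + (if a t = 1 then 1 else 0) := by
    intro t
    rw [hp, hp, Finset.range_add_one, Finset.filter_insert]
    split <;> simp [Finset.card_insert_of_notMem]
  have hpt : ∀ t, p t ≤ t := by
    intro t
    rw [hp]
    calc ((Finset.range t).filter (fun i => a i = 1)).card
        ≤ (Finset.range t).card := Finset.card_filter_le _ _
      _ = t := Finset.card_range t
  have hshift : ∀ t, p (t + Pa) = p t + w := by
    intro t
    induction t with
    | zero => simp [hp, hw]
    | succ n ih =>
      have h1 : n + 1 + Pa = (n + Pa) + 1 := by ring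
      rw [h1, hstep, ih, hstep, ha]
      ring
  have hwle : w ≤ Pa := by
    have := hpt Pa
    rw [hp Pa, ← hw] at this
    exact this
  have hqshift : ∀ t, q (t + Pa) = q t + (Pa - w) := by
    intro t
    have := hpt t
    rw [hq, hq, hshift]
    omega
  intro t
  obtain ⟨kb, hkb⟩ := hwb
  obtain ⟨kl, hkl⟩ := hwl
  rw [hz, hz, hshift, hqshift, hkl, hkb, Nat.mul_comm Pb, Nat.mul_comm Pl,
    periodic_mul hb, periodic_mul hl]
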